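/- Let $p\ge 1$ be an integer, $\Theta\in\mathbb{R}$, and let $u,v:\mathbb{R}\to\mathbb{R}$ be differentiable at $t\in\mathbb{R}$. Define $P(t)=\sum_{\beta=0}^{p}\frac{p!}{\beta!(p-\beta)!}\Theta^{\beta^2}u(t)^{\beta}v(t)^{p-\beta}$. Then $P$ is differentiable at $t$ and $P'(t)=\sum_{\beta=0}^{p-1}\frac{p!}{\beta!(p-1-\beta)!}\Theta^{\beta^2}u(t)^{\beta}v(t)^{p-1-\beta}\left(\Theta^{2\beta+1}u'(t)+v'(t)\right)$. -/

import Mathlib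

/-- Differentiation of the Sharma–Morgan Lyapunov polynomial
`P(t) = ∑_{β=0}^{p} p!/(β!(p-β)!) Θ^{β²} u(t)^β v(t)^{p-β}`. -/
theorem lyapunov_poly_deriv (p : ℕ) (hp : 1 ≤ p) (Θ : ℝ) (u v : ℝ → ℝ) (t u' v' : ℝ)
    (hu : HasDerivAt u u' t) (hv : HasDerivAt v v' t) :
    HasDerivAt
      (fun s : ℝ => ∑ β ∈ Finset.range (p + 1),
        (p.factorial : ℝ) / ((β.factorial : ℝ) * ((p - β).factorial : ℝ)) *
          Θ ^ (β ^ 2) * u s ^ β * v s ^ (p - β))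
      (∑ β ∈ Finset.range p,
        (p.factorial : ℝ) / ((β.factorial : ℝ) * ((p - 1 - β).factorial : ℝ)) *
          Θ ^ (β ^ 2) * u t ^ β * v t ^ (p - 1 - β) * (Θ ^ (2 * β + 1) * u' + v'))
      t := by
  have key : HasDerivAt
      (fun s : ℝ => ∑ β ∈ Finset.range (p + 1),
        (p.factorial : ℝ) / ((β.factorial : ℝ) * ((p - β).factorial : ℝ)) *
          Θ ^ (β ^ 2) * u s ^ β * v s ^ (p - β))
      (∑ β ∈ Finset.range (p + 1),
        ((p.factorial : ℝ) / ((β.factorial : ℝ) * ((p - β).factorial : ℝ)) * Θ ^ (β ^ 2) *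
          ((β : ℝ) * u t ^ (β - 1) * u' * v t ^ (p - β)) +
         (p.factorial : ℝ) / ((β.factorial : ℝ) * ((p - β).factorial : ℝ)) * Θ ^ (β ^ 2) *
          (u t ^ β * (((p - β : ℕ) : ℝ) * v t ^ (p - β - 1) * v')))) t := by
    apply HasDerivAt.fun_sum
    intro β _
    have h := ((hu.fun_pow β).fun_mul (hv.fun_pow (p - β))).const_mul
      ((p.factorial : ℝ) / ((β.factorial : ℝ) * ((p - β).factorial : ℝ)) * Θ ^ (β ^ 2))
    have hfun : (fun s : ℝ =>
        (p.factorial : ℝ) / ((β.factorial : ℝ) * ((p - β).factorial : ℝ)) * Θ ^ (β ^ 2) *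
          (u s ^ β * v s ^ (p - β)))
        = fun s : ℝ =>
        (p.factorial : ℝ) / ((β.factorial : ℝ) * ((p - β).factorial : ℝ)) *
          Θ ^ (β ^ 2) * u s ^ β * v s ^ (p - β) := by
      funext s; ring
    rw [hfun] at h
    refine h.congr_deriv ?_
    ring
  have hsum : (∑ β ∈ Finset.range p,
        (p.factorial : ℝ) / ((β.factorial : ℝ) * ((p - 1 - β).factorial : ℝ)) *
          Θ ^ (β ^ 2) * u t ^ β * v t ^ (p - 1 - β) * (Θ ^ (2 * β + 1) * u' + v'))
      = (∑ β ∈ Finset.range (p + 1),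
        ((p.factorial : ℝ) / ((β.factorial : ℝ) * ((p - β).factorial : ℝ)) * Θ ^ (β ^ 2) *
          ((β : ℝ) * u t ^ (β - 1) * u' * v t ^ (p - β)) +
         (p.factorial : ℝ) / ((β.factorial : ℝ) * ((p - β).factorial : ℝ)) * Θ ^ (β ^ 2) *
          (u t ^ β * (((p - β : ℕ) : ℝ) * v t ^ (p - β - 1) * v')))) := by
    rw [Finset.sum_add_distrib]
    rw [Finset.sum_range_succ' (fun β =>
        (p.factorial : ℝ) / ((β.factorial : ℝ) * ((p - β).factorial : ℝ)) * Θ ^ (β ^ 2) *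
          ((β : ℝ) * u t ^ (β - 1) * u' * v t ^ (p - β)))]
    rw [Finset.sum_range_succ (fun β =>
        (p.factorial : ℝ) / ((β.factorial : ℝ) * ((p - β).factorial : ℝ)) * Θ ^ (β ^ 2) *
          (u t ^ β * (((p - β : ℕ) : ℝ) * v t ^ (p - β - 1) * v')))]
    simp only [Nat.cast_zero, Nat.sub_self, Nat.cast_ofNat, zero_mul, mul_zero, add_zero]
    have step : ∀ β ∈ Finset.range p,
        (p.factorial : ℝ) / ((β.factorial : ℝ) * ((p - 1 - β).factorial : ℝ)) *
          Θ ^ (β ^ 2) * u t ^ β * v t ^ (p - 1 - β) * (Θ ^ (2 * β + 1) * u' + v')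
        = ((p.factorial : ℝ) / (((β+1).factorial : ℝ) * ((p - (β+1)).factorial : ℝ)) *
            Θ ^ ((β+1) ^ 2) *
            (((β+1 : ℕ) : ℝ) * u t ^ ((β+1) - 1) * u' * v t ^ (p - (β+1))))
          + ((p.factorial : ℝ) / ((β.factorial : ℝ) * ((p - β).factorial : ℝ)) * Θ ^ (β ^ 2) *
            (u t ^ β * (((p - β : ℕ) : ℝ) * v t ^ (p - β - 1) * v'))) := by
      intro β hβ
      have hβp : β < p := Finset.mem_range.mp hβ
      have e1 : p - (β + 1) = p - 1 - β := by omega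
      have e2 : p - β - 1 = p - 1 - β := by omega
      have e3 : (β + 1) ^ 2 = β ^ 2 + (2 * β + 1) := by ring
      have e4 : p - β = (p - 1 - β) + 1 := by omega
      have hf1 : (((β+1).factorial : ℝ)) = (β + 1 : ℝ) * (β.factorial : ℝ) := by
        rw [Nat.factorial_succ]; push_cast; ring
      have hf2 : (((p - β).factorial : ℝ)) = ((p - β : ℕ) : ℝ) * ((p - 1 - β).factorial : ℝ) := by
        rw [e4, Nat.factorial_succ]; push_cast [e4]; ring
      rw [e1, e2, e3, Nat.add_sub_cancel, pow_add, hf1, hf2]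
      have h1 : (β.factorial : ℝ) ≠ 0 := Nat.cast_ne_zero.mpr β.factorial_ne_zero
      have h2 : ((p - 1 - β).factorial : ℝ) ≠ 0 := Nat.cast_ne_zero.mpr (p - 1 - β).factorial_ne_zero
      have h3 : (β + 1 : ℝ) ≠ 0 := by positivity
      have h4 : ((p - β : ℕ) : ℝ) ≠ 0 := by
        have : 0 < p - β := by omega
        exact Nat.cast_ne_zero.mpr (by omega)
      push_cast
      field_simp
      ring
    rw [Finset.sum_congr rfl step, Finset.sum_add_distrib]
  rw [hsum]
  exact key
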